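/- Let p̄_rand = (p_rand(1), p_rand(2), …) be a random sequence with Prob(p_rand(i) = 0) = Prob(p_rand(i) = 1) = 1/2, independently for each i. Then with probability 1, the sequence p̄_rand has the following property: for every k there exists n₀ = n₀(k) such that for all n ≥ n₀ the (deterministic, given p̄_rand) graph G(n, p̄_rand) has property 𝒜_k; consequently, with probability 1, for every first-order sentence ψ of the language L the truth value of ψ in G(n, p̄_rand) is eventually constant in n, so a zero-one law holds for every ψ from L. -/

import Mathlib

open FirstOrder Filter

namespace RandomGraph

/-- The set of potential edges of a graph on `Fin n` (pairs `(v,w)` with `v < w`).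
Vertex `v : Fin n` represents the number `v + 1` of the interval `[n] = {1, …, n}`. -/
abbrev EdgeIdx (n : ℕ) := {e : Fin n × Fin n // e.1 < e.2}

/-- An outcome of the random graph on `[n]`: a choice of which potential edges are present. -/
abbrev Sample (n : ℕ) := EdgeIdx n → Bool

/-- Adjacency of two vertices (described by their values in `Fin n`) in the outcome `ω`. -/
def adjVal {n : ℕ} (ω : Sample n) (a b : ℕ) : Prop :=
  ∃ e : EdgeIdx n, ω e = true ∧
    ((e.1.1.val = a ∧ e.1.2.val = b) ∨ (e.1.1.val = b ∧ e.1.2.val = a))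

/-- Adjacency of two vertices in the outcome `ω`. -/
def sampleAdj {n : ℕ} (ω : Sample n) (v w : Fin n) : Prop := adjVal ω v.val w.val

/-- The probability of the outcome `ω` in the model `G(n, p̄)`: each pair of distinct
vertices at distance `d` is an edge with probability `p d`, independently.  (The value `p 0` is
never used, since distinct vertices are at distance at least 1.) -/
noncomputable def sampleWeight (p : ℕ → ℝ) {n : ℕ} (ω : Sample n) : ℝ :=
  ∏ e : EdgeIdx n,
    (if ω e then p (e.1.2.val - e.1.1.val) else 1 - p (e.1.2.val - e.1.1.val))

/-- The probability of the outcome `ω` in the circular model `C(n, p̄)`: vertices `v, w` are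
adjacent with probability `p (min |v-w| (n - |v-w|))`, independently. -/
noncomputable def cWeight (p : ℕ → ℝ) {n : ℕ} (ω : Sample n) : ℝ :=
  ∏ e : EdgeIdx n,
    (if ω e then p (min (e.1.2.val - e.1.1.val) (n - (e.1.2.val - e.1.1.val)))
      else 1 - p (min (e.1.2.val - e.1.1.val) (n - (e.1.2.val - e.1.1.val))))

open scoped Classical in
/-- The probability of the event `P` in the random graph `G(n, p̄)`. -/
noncomputable def Pr (p : ℕ → ℝ) (n : ℕ) (P : Sample n → Prop) : ℝ :=
  ∑ ω : Sample n, if P ω then sampleWeight p ω else 0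

open scoped Classical in
/-- The probability of the event `P` in the circular random graph `C(n, p̄)`. -/
noncomputable def cPr (p : ℕ → ℝ) (n : ℕ) (P : Sample n → Prop) : ℝ :=
  ∑ ω : Sample n, if P ω then cWeight p ω else 0

/-! ### The language `L` of graphs (also used as the language `L^c`) -/

/-- An outcome `ω` of the random graph, viewed as a structure of `FirstOrder.Language.graph`,
the language with a single binary adjacency predicate. -/
def graphStructure {n : ℕ} (ω : Sample n) : Language.graph.Structure (Fin n) where
  RelMap | .adj => fun x => sampleAdj ω (x 0) (x 1)

/-- Satisfaction of a sentence of the language `L` in the outcome `ω`. -/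
def SatL {n : ℕ} (ω : Sample n) (ψ : Language.graph.Sentence) : Prop :=
  @Language.Sentence.Realize _ _ (graphStructure ω) ψ

/-- `Prob(n, p̄; ψ)` for a sentence `ψ` of the language `L`. -/
noncomputable def ProbL (p : ℕ → ℝ) (n : ℕ) (ψ : Language.graph.Sentence) : ℝ :=
  Pr p n fun ω => SatL ω ψ

/-- The probability that `C(n, p̄)` satisfies a sentence `ψ` of the language `L^c = L`. -/
noncomputable def cProbL (p : ℕ → ℝ) (n : ℕ) (ψ : Language.graph.Sentence) : ℝ :=
  cPr p n fun ω => SatL ω ψ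

/-! ### The language `L₊` -/

/-- The constants of the language `L₊`: the first element `1` and the last element `n`. -/
inductive plusFunc : ℕ → Type
  | one : plusFunc 0
  | last : plusFunc 0

/-- The relations of `L₊`: adjacency and successor. -/
inductive plusRel : ℕ → Type
  | adj : plusRel 2
  | succ : plusRel 2

/-- The language `L₊` with adjacency, successor (`x = y + 1`), and constants `1` and `n`. -/
def Lplus : Language := ⟨plusFunc, plusRel⟩

/-- An outcome `ω` of the random graph on `[m+1]`, as an `L₊`-structure. -/
def plusStructure {m : ℕ} (ω : Sample (m + 1)) : Lplus.Structure (Fin (m + 1)) where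
  funMap | .one => fun _ => 0 | .last => fun _ => Fin.last m
  RelMap
    | .adj => fun x => sampleAdj ω (x 0) (x 1)
    | .succ => fun x => (x 0).val = (x 1).val + 1

/-- `Prob(n, p̄; ψ)` for a sentence `ψ` of `L₊` (set to `0` in the irrelevant case `n = 0`,
where the constants cannot be interpreted). -/
noncomputable def ProbPlus (p : ℕ → ℝ) : ℕ → Lplus.Sentence → ℝ
  | 0, _ => 0
  | (m + 1), ψ => Pr p (m + 1) fun ω => @Language.Sentence.Realize _ _ (plusStructure ω) ψ

/-! ### The language `L≤` -/

/-- The relations of `L≤`: adjacency and linear order. -/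
inductive leRel : ℕ → Type
  | adj : leRel 2
  | le : leRel 2

/-- The language `L≤` with adjacency and a linear order. -/
def Lle : Language := ⟨fun _ => Empty, leRel⟩

/-- An outcome `ω` of the random graph on `[n]`, as an `L≤`-structure. -/
def leStructure {n : ℕ} (ω : Sample n) : Lle.Structure (Fin n) where
  funMap := fun f _ => Empty.elim f
  RelMap
    | .adj => fun x => sampleAdj ω (x 0) (x 1)
    | .le => fun x => x 0 ≤ x 1

/-- Satisfaction of a sentence of `L≤` in the outcome `ω`. -/
def SatLe {n : ℕ} (ω : Sample n) (ψ : Lle.Sentence) : Prop :=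
  @Language.Sentence.Realize _ _ (leStructure ω) ψ

/-- `Prob(n, p̄; ψ)` for a sentence `ψ` of `L≤`. -/
noncomputable def ProbLe (p : ℕ → ℝ) (n : ℕ) (ψ : Lle.Sentence) : ℝ :=
  Pr p n fun ω => SatLe ω ψ

/-! ### The circular languages `L₊^c` and `L≤^c` -/

/-- The relations of `L₊^c`: adjacency and cyclic successor. -/
inductive plusCRel : ℕ → Type
  | adj : plusCRel 2
  | succ : plusCRel 2

/-- The language `L₊^c`, with adjacency and cyclic successor (`x = y + 1 (mod n)`). -/
def LplusC : Language := ⟨fun _ => Empty, plusCRel⟩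

/-- An outcome `ω` of the circular random graph on `[n]`, as an `L₊^c`-structure. -/
def plusCStructure {n : ℕ} (ω : Sample n) : LplusC.Structure (Fin n) where
  funMap := fun f _ => Empty.elim f
  RelMap
    | .adj => fun x => sampleAdj ω (x 0) (x 1)
    | .succ => fun x => (x 0).val = ((x 1).val + 1) % n

/-- The probability that `C(n, p̄)` satisfies a sentence `ψ` of the language `L₊^c`. -/
noncomputable def cProbPlus (p : ℕ → ℝ) (n : ℕ) (ψ : LplusC.Sentence) : ℝ :=
  cPr p n fun ω => @Language.Sentence.Realize _ _ (plusCStructure ω) ψ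

/-- The relations of `L≤^c`: adjacency and the ternary clockwise-order predicate. -/
inductive cycRel : ℕ → Type
  | adj : cycRel 2
  | btw : cycRel 3

/-- The language `L≤^c`, with adjacency and the ternary clockwise-order predicate `C`. -/
def Lcyc : Language := ⟨fun _ => Empty, cycRel⟩

/-- `C(a, b, c)`: `a ≤ b ≤ c` holds after some cyclic permutation of `(a, b, c)`. -/
def cyclicBtw {n : ℕ} (a b c : Fin n) : Prop :=
  (a ≤ b ∧ b ≤ c) ∨ (b ≤ c ∧ c ≤ a) ∨ (c ≤ a ∧ a ≤ b)

/-- An outcome `ω` of the circular random graph on `[n]`, as an `L≤^c`-structure. -/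
def cycStructure {n : ℕ} (ω : Sample n) : Lcyc.Structure (Fin n) where
  funMap := fun f _ => Empty.elim f
  RelMap
    | .adj => fun x => sampleAdj ω (x 0) (x 1)
    | .btw => fun x => cyclicBtw (x 0) (x 1) (x 2)

/-- Satisfaction of a sentence of `L≤^c` in the outcome `ω`. -/
def SatCyc {n : ℕ} (ω : Sample n) (ψ : Lcyc.Sentence) : Prop :=
  @Language.Sentence.Realize _ _ (cycStructure ω) ψ

/-- The probability that `C(n, p̄)` satisfies a sentence `ψ` of the language `L≤^c`. -/
noncomputable def cProbCyc (p : ℕ → ℝ) (n : ℕ) (ψ : Lcyc.Sentence) : ℝ :=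
  cPr p n fun ω => SatCyc ω ψ


/-- The deterministic graph `G(n, p̄)` determined by a zero-one sequence `p̄` (encoded as a
function `b : ℕ → Bool`, `b i = true` meaning `p i = 1`): vertices `v ≠ w` are adjacent
exactly when `p |v - w| = 1`. -/
def bitsGraph (b : ℕ → Bool) (n : ℕ) : SimpleGraph (Fin n) where
  Adj v w := v ≠ w ∧ b (Nat.dist v.val w.val) = true
  symm := ⟨by
    rintro v w ⟨h1, h2⟩
    exact ⟨h1.symm, by rwa [Nat.dist_comm]⟩⟩
  loopless := ⟨fun v h => h.1 rfl⟩

/-- The property `𝒜_k`: for every set `A` of exactly `k` vertices and every `A' ⊆ A` there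
is a vertex adjacent to all vertices of `A'` and to no vertex of `A \ A'`. -/
def HasPropA (k : ℕ) {n : ℕ} (G : SimpleGraph (Fin n)) : Prop :=
  ∀ A : Finset (Fin n), A.card = k → ∀ A' ⊆ A,
    ∃ v : Fin n, (∀ a ∈ A', G.Adj v a) ∧ (∀ a ∈ A, a ∉ A' → ¬ G.Adj v a)

/-!
Call `G` `k`-extendable if every set `A` of at most `k` vertices and every `A' ⊆ A` admit a
vertex outside `A` adjacent to exactly `A'` within `A`. If `G` and `H` are both `k`-extendable,
Duplicator wins the `k`-round Ehrenfeucht–Fraïssé game on them, so they agree on all sentences of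
quantifier depth at most `k`; hence it suffices to show that, almost surely, `G(n, p̄_rand)` is
`k`-extendable for all large `n`, for every `k`.

Fix `A` and `A'`. A greedy choice gives `⌊n / (3k² + k + 1)⌋` vertices `v ∉ A` for which all the
distances `|v - a|` (`a ∈ A`) are distinct, also across different `v` (once `m` vertices are
chosen, the next one must avoid at most `k + m + k² + 2mk² < (3k² + k + 1)(m + 1)` points). Whether such a `v` is
adjacent to exactly `A'` is then decided by its own `|A|` bits of `p̄_rand`, so all of them fail
with probability at most `(1 - 2⁻ᵏ) ^ ⌊n / (3k² + k + 1)⌋`. A union bound over the polynomially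
many pairs `(A, A')` gives a summable series, and Borel–Cantelli concludes.
-/

open Finset

section DistanceSeparated

variable {n : ℕ}

def pairDist (p : Fin n × Fin n) : ℕ := Nat.dist p.1 p.2

/-- If `x ∉ collisionPoints A V`, then `(v, a) ↦ |v - a|` stays injective on `V × A` when `x` is
added to `V`: `|x - a| = |x - a'|` forces `x = (a + a') / 2`, and `|x - a| = |v - a'|` forces
`x = a ± |v - a'|`. -/
def collisionPoints (A V : Finset (Fin n)) : Finset ℕ :=
  A.image Fin.val ∪ V.image Fin.val ∪ (A ×ˢ A).image (fun p => (p.1.val + p.2.val) / 2) ∪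
    (V ×ˢ A ×ˢ A).biUnion fun p =>
      {p.2.1.val + pairDist (p.1, p.2.2), p.2.1.val - pairDist (p.1, p.2.2)}

lemma card_collisionPoints_le (A V : Finset (Fin n)) :
    #(collisionPoints A V) ≤ #A + #V + #A * #A + #V * (#A * #A) * 2 := by
  have hpair : ∀ p ∈ V ×ˢ A ×ˢ A,
      #({p.2.1.val + pairDist (p.1, p.2.2), p.2.1.val - pairDist (p.1, p.2.2)} : Finset ℕ) ≤ 2 :=
    fun _ _ => card_le_two
  have := card_biUnion_le_card_mul _ _ 2 hpair
  simp only [card_product] at this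
  unfold collisionPoints
  grw [card_union_le, card_union_le, card_union_le, card_image_le, card_image_le,
    card_image_le, card_product, this]

lemma injOn_pairDist_insert {A V : Finset (Fin n)}
    (hV : Set.InjOn pairDist (↑V ×ˢ ↑A : Set (Fin n × Fin n))) {x : Fin n} (hx : x.val ∉ collisionPoints A V) :
    Set.InjOn pairDist (↑(insert x V) ×ˢ ↑A : Set (Fin n × Fin n)) := by
  simp only [collisionPoints, mem_union, mem_image, mem_biUnion, mem_product, not_or,
    not_exists, not_and, mem_insert, mem_singleton] at hx
  obtain ⟨⟨-, hmid⟩, hshift⟩ := hx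
  have hnew : ∀ v ∈ V, ∀ a ∈ A, ∀ a' ∈ A, pairDist (x, a) ≠ pairDist (v, a') := by
    intro v hv a ha a' ha' h
    have := hshift (v, a, a') ⟨hv, ha, ha'⟩
    simp only [pairDist, Nat.dist] at h this
    omega
  rintro ⟨v, a⟩ hva ⟨v', a'⟩ hva' h
  simp only [Set.mem_prod, coe_insert, Set.mem_insert_iff, mem_coe] at hva hva'
  obtain ⟨hv | hv, ha⟩ := hva <;> obtain ⟨hv' | hv', ha'⟩ := hva' <;> subst_vars
  · by_contra hne
    have haa' : a ≠ a' := fun h => hne (by rw [h])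
    have := hmid (a, a') ⟨ha, ha'⟩
    simp only [pairDist, Nat.dist] at h this
    omega
  · exact absurd h (hnew v' hv' a ha a' ha')
  · exact absurd h.symm (hnew v hv a' ha' a ha)
  · exact hV (by simp [hv, ha]) (by simp [hv', ha']) h

lemma exists_val_notMem (B : Finset ℕ) (hB : #B < n) : ∃ x : Fin n, x.val ∉ B := by
  by_contra! h
  have := card_le_card_of_injOn (s := univ) Fin.val (fun x _ => h x) Fin.val_injective.injOn
  simp only [card_univ, Fintype.card_fin] at this
  omega

lemma exists_injOn_pairDist (A : Finset (Fin n)) {k : ℕ} (hA : #A ≤ k) :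
    ∃ V : Finset (Fin n), #V = n / (3 * k ^ 2 + k + 1) ∧ Disjoint V A ∧
      Set.InjOn pairDist (↑V ×ˢ ↑A : Set (Fin n × Fin n)) := by
  suffices h : ∀ m ≤ n / (3 * k ^ 2 + k + 1), ∃ V : Finset (Fin n), #V = m ∧ Disjoint V A ∧
      Set.InjOn pairDist (↑V ×ˢ ↑A : Set (Fin n × Fin n)) from h _ le_rfl
  intro m
  induction m with
  | zero => exact fun _ => ⟨∅, by simp⟩
  | succ m ih =>
    intro hm
    obtain ⟨V, hVcard, hVA, hV⟩ := ih (by omega)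
    have hroom : (3 * k ^ 2 + k + 1) * (m + 1) ≤ n :=
      (Nat.mul_le_mul_left _ hm).trans (Nat.mul_div_le n _)
    obtain ⟨x, hx⟩ := exists_val_notMem (collisionPoints A V) <| by
      grw [card_collisionPoints_le, hVcard, hA]
      nlinarith
    have hxA : x ∉ A := fun h => hx (by simp [collisionPoints, Fin.val_inj, h])
    have hxV : x ∉ V := fun h => hx (by simp [collisionPoints, Fin.val_inj, h])
    exact ⟨insert x V, by rw [card_insert_of_notMem hxV, hVcard],
      disjoint_insert_left.mpr ⟨hxA, hVA⟩, injOn_pairDist_insert hV hx⟩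

end DistanceSeparated

section ExtensionProperty

open Language

variable {V W : Type*}

def IsExtensionVertex (G : SimpleGraph V) (A A' : Finset V) (v : V) : Prop :=
  v ∉ A ∧ (∀ a ∈ A', G.Adj v a) ∧ ∀ a ∈ A, a ∉ A' → ¬ G.Adj v a

def ExtensionProperty (k : ℕ) (G : SimpleGraph V) : Prop :=
  ∀ A : Finset V, #A ≤ k → ∀ A' ⊆ A, ∃ v, IsExtensionVertex G A A' v

lemma ExtensionProperty.hasPropA {k n : ℕ} {G : SimpleGraph (Fin n)}
    (hG : ExtensionProperty k G) : HasPropA k G := fun A hA A' hA' =>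
  let ⟨v, _, hv⟩ := hG A hA.le A' hA'
  ⟨v, hv⟩

def quantifierDepth {L : Language} {α : Type*} : ∀ {m : ℕ}, L.BoundedFormula α m → ℕ
  | _, .falsum => 0
  | _, .equal _ _ => 0
  | _, .rel _ _ => 0
  | _, .imp φ ψ => max (quantifierDepth φ) (quantifierDepth ψ)
  | _, .all φ => quantifierDepth φ + 1

lemma graph_term_eq_var {m : ℕ} (t : Language.graph.Term (Empty ⊕ Fin m)) :
    ∃ i, t = Term.var (Sum.inr i) := by
  rcases t with (e | i) | ⟨f, _⟩
  · exact e.elim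
  · exact ⟨i, rfl⟩
  · exact isEmptyElim f

def IsPartialIso (G : SimpleGraph V) (H : SimpleGraph W) {m : ℕ}
    (xs : Fin m → V) (ys : Fin m → W) : Prop :=
  ∀ i j, (xs i = xs j ↔ ys i = ys j) ∧ (G.Adj (xs i) (xs j) ↔ H.Adj (ys i) (ys j))

namespace IsPartialIso

variable {G : SimpleGraph V} {H : SimpleGraph W} {m : ℕ} {xs : Fin m → V} {ys : Fin m → W}

lemma symm (h : IsPartialIso G H xs ys) : IsPartialIso H G ys xs :=
  fun i j => ⟨(h i j).1.symm, (h i j).2.symm⟩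

lemma snoc (h : IsPartialIso G H xs ys) {v : V} {w : W}
    (hvw : ∀ i, (xs i = v ↔ ys i = w) ∧ (G.Adj (xs i) v ↔ H.Adj (ys i) w)) :
    IsPartialIso G H (Fin.snoc xs v) (Fin.snoc ys w) := by
  intro i j
  induction i using Fin.lastCases <;> induction j using Fin.lastCases <;>
    simp only [Fin.snoc_last, Fin.snoc_castSucc]
  case last.last => simp
  case last.cast j => simpa only [eq_comm, G.adj_comm, H.adj_comm] using hvw j
  case cast.last i => exact hvw i
  case cast.cast i j => exact h i j

lemma exists_snoc {k : ℕ} (hG : ExtensionProperty k G) (h : IsPartialIso G H xs ys)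
    (hm : m ≤ k) (w : W) : ∃ v, IsPartialIso G H (Fin.snoc xs v) (Fin.snoc ys w) := by
  classical
  by_cases hw : ∃ i₀, ys i₀ = w
  · obtain ⟨i₀, rfl⟩ := hw
    exact ⟨xs i₀, h.snoc fun i => h i i₀⟩
  rw [not_exists] at hw
  obtain ⟨v, hvA, hpos, hneg⟩ := hG (univ.image xs) (card_image_le.trans (by simpa using hm))
    ((univ.filter fun i => H.Adj (ys i) w).image xs) (image_subset_image (filter_subset _ _))
  refine ⟨v, h.snoc fun i => ⟨iff_of_false (fun hi => hvA (hi ▸ mem_image_of_mem xs (mem_univ i)))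
    (hw i), ⟨fun hadj => ?_, fun hadj => G.adj_symm
      (hpos _ (mem_image_of_mem xs (mem_filter.mpr ⟨mem_univ i, hadj⟩)))⟩⟩⟩
  by_contra hnadj
  refine hneg (xs i) (mem_image_of_mem xs (mem_univ i)) ?_ (G.adj_symm hadj)
  simp only [mem_image, mem_filter, mem_univ, true_and, not_exists, not_and]
  exact fun j hj hji => hnadj (((h j i).1.mp hji) ▸ hj)

end IsPartialIso

lemma realize_iff_of_isPartialIso {G : SimpleGraph V} {H : SimpleGraph W} {k m : ℕ}
    (hG : ExtensionProperty k G) (hH : ExtensionProperty k H)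
    (φ : Language.graph.BoundedFormula Empty m) (hφ : m + quantifierDepth φ ≤ k)
    {xs : Fin m → V} {ys : Fin m → W} (h : IsPartialIso G H xs ys) :
    @BoundedFormula.Realize _ V G.structure _ _ φ default xs ↔
      @BoundedFormula.Realize _ W H.structure _ _ φ default ys := by
  induction φ with
  | falsum => exact Iff.rfl
  | equal t₁ t₂ =>
    obtain ⟨i, rfl⟩ := graph_term_eq_var t₁
    obtain ⟨j, rfl⟩ := graph_term_eq_var t₂
    exact (h i j).1
  | rel R ts =>
    cases R
    obtain ⟨i, hi⟩ := graph_term_eq_var (ts 0)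
    obtain ⟨j, hj⟩ := graph_term_eq_var (ts 1)
    let _ := G.structure
    let _ := H.structure
    show G.Adj ((ts 0).realize _) ((ts 1).realize _) ↔ H.Adj ((ts 0).realize _) ((ts 1).realize _)
    rw [hi, hj]
    exact (h i j).2
  | imp φ ψ ihφ ihψ =>
    simp only [quantifierDepth] at hφ
    exact imp_congr (ihφ (by omega) h) (ihψ (by omega) h)
  | all φ ih =>
    simp only [quantifierDepth] at hφ
    simp only [BoundedFormula.realize_all]
    constructor
    · intro hall w
      obtain ⟨v, hvw⟩ := h.exists_snoc hG (by omega) w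
      exact (ih (by omega) hvw).mp (hall v)
    · intro hall v
      obtain ⟨w, hwv⟩ := h.symm.exists_snoc hH (by omega) v
      exact (ih (by omega) hwv.symm).mpr (hall w)

lemma realize_sentence_iff_of_extensionProperty {G : SimpleGraph V} {H : SimpleGraph W}
    (ψ : Language.graph.Sentence) (hG : ExtensionProperty (quantifierDepth ψ) G)
    (hH : ExtensionProperty (quantifierDepth ψ) H) :
    @Sentence.Realize _ V G.structure ψ ↔ @Sentence.Realize _ W H.structure ψ :=
  realize_iff_of_isPartialIso hG hH ψ (by omega) (fun i => i.elim0)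

lemma eventually_realize_or_eventually_not_realize {V : ℕ → Type*}
    {G : ∀ n, SimpleGraph (V n)} (ψ : Language.graph.Sentence)
    (hG : ∀ᶠ n in atTop, ExtensionProperty (quantifierDepth ψ) (G n)) :
    (∀ᶠ n in atTop, @Sentence.Realize _ _ (G n).structure ψ) ∨
      ∀ᶠ n in atTop, ¬ @Sentence.Realize _ _ (G n).structure ψ := by
  obtain ⟨n₀, hn₀⟩ := eventually_atTop.mp hG
  have hiff : ∀ n ≥ n₀, @Sentence.Realize _ _ (G n).structure ψ ↔
      @Sentence.Realize _ _ (G n₀).structure ψ := fun n hn =>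
    realize_sentence_iff_of_extensionProperty ψ (hn₀ n hn) (hn₀ n₀ le_rfl)
  by_cases hsat : @Sentence.Realize _ _ (G n₀).structure ψ
  · exact .inl (eventually_atTop.mpr ⟨n₀, fun n hn => (hiff n hn).mpr hsat⟩)
  · exact .inr (eventually_atTop.mpr ⟨n₀, fun n hn => mt (hiff n hn).mp hsat⟩)

end ExtensionProperty

section FairBits

open MeasureTheory ProbabilityTheory Function

variable {Ω ι : Type*} [MeasurableSpace Ω] {μ : Measure Ω} [IsProbabilityMeasure μ]
  {X : ι → Ω → Bool}

lemma measurableSet_forall_eq (hmeas : ∀ i, Measurable (X i)) (J : Finset ι) (σ : ι → Bool) :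
    MeasurableSet {ω | ∀ i ∈ J, X i ω = σ i} := by
  simp only [Set.ofPred_forall]
  exact J.measurableSet_biInter fun i _ => hmeas i (measurableSet_singleton (σ i))

lemma measure_eq_half (hmeas : ∀ i, Measurable (X i))
    (hdist : ∀ i, μ {ω | X i ω = true} = 1 / 2) (i : ι) (b : Bool) :
    μ (X i ⁻¹' {b}) = 2⁻¹ := by
  have htrue : X i ⁻¹' {true} = {ω | X i ω = true} := rfl
  cases b
  · have hfalse : X i ⁻¹' {false} = (X i ⁻¹' {true})ᶜ := by ext ω; simp
    rw [hfalse, prob_compl_eq_one_sub (hmeas i (measurableSet_singleton _)), htrue, hdist i,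
      one_div, ENNReal.one_sub_inv_two]
  · rw [htrue, hdist i, one_div]

lemma measure_forall_eq (hmeas : ∀ i, Measurable (X i)) (hindep : iIndepFun X μ)
    (hdist : ∀ i, μ {ω | X i ω = true} = 1 / 2) (J : Finset ι) (σ : ι → Bool) :
    μ {ω | ∀ i ∈ J, X i ω = σ i} = 2⁻¹ ^ #J := by
  have hset : {ω | ∀ i ∈ J, X i ω = σ i} = ⋂ i ∈ J, X i ⁻¹' {σ i} := by ext ω; simp
  rw [hset, hindep.meas_biInter fun i _ => ⟨{σ i}, measurableSet_singleton _, rfl⟩,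
    prod_congr rfl fun i _ => measure_eq_half hmeas hdist i (σ i), prod_const]

lemma iIndepSet_forall_eq {β : Type*} (hmeas : ∀ i, Measurable (X i)) (hindep : iIndepFun X μ)
    (hdist : ∀ i, μ {ω | X i ω = true} = 1 / 2) {S : β → Finset ι}
    (hS : Pairwise (Disjoint on S)) (τ : ι → Bool) :
    iIndepSet (fun b => {ω | ∀ i ∈ S b, X i ω = τ i}) μ := by
  classical
  refine (iIndepSet_iff_meas_biInter fun b => measurableSet_forall_eq hmeas _ _).mpr fun s => ?_
  have hset : ⋂ b ∈ s, {ω | ∀ i ∈ S b, X i ω = τ i} = {ω | ∀ i ∈ s.biUnion S, X i ω = τ i} := by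
    ext ω; simp only [Set.mem_iInter, Set.mem_ofPred_eq, mem_biUnion]; grind
  rw [hset, measure_forall_eq hmeas hindep hdist,
    card_biUnion fun b _ b' _ hbb' => hS hbb', ← prod_pow_eq_pow_sum]
  exact prod_congr rfl fun b _ => (measure_forall_eq hmeas hindep hdist _ _).symm

lemma measure_iInter_compl_le_of_iIndepSet {β : Type*} [Fintype β] {P : β → Set Ω}
    (h : iIndepSet P μ) (hP : ∀ b, MeasurableSet (P b)) {q : ENNReal} (hq : ∀ b, q ≤ μ (P b)) :
    μ (⋂ b, (P b)ᶜ) ≤ (1 - q) ^ Fintype.card β := by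
  rw [((iIndepSet_iff_iIndep _ _).mp h).meas_iInter
    fun b => (MeasurableSpace.measurableSet_generateFrom (Set.mem_singleton _)).compl, ← card_univ,
    ← prod_const]
  exact prod_le_prod' fun b _ => by
    rw [prob_compl_eq_one_sub (hP b)]; exact tsub_le_tsub_left (hq b) 1

end FairBits

lemma card_filter_card_le_mul_pow (n k : ℕ) :
    #{A : Finset (Fin n) | #A ≤ k} ≤ (k + 1) * (n + 1) ^ k := by
  have hsub : ({A : Finset (Fin n) | #A ≤ k} : Finset (Finset (Fin n))) ⊆
       (range (k + 1)).biUnion fun j => powersetCard j univ := by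
    intro A hA
    exact mem_biUnion.mpr ⟨#A, mem_range.mpr (Nat.lt_succ_of_le (mem_filter.mp hA).2),
      mem_powersetCard.mpr ⟨subset_univ A, rfl⟩⟩
  grw [hsub, card_biUnion_le]
  refine (sum_le_card_nsmul _ _ ((n + 1) ^ k) fun j hj => ?_).trans (by simp)
  rw [card_powersetCard, card_univ, Fintype.card_fin]
  calc n.choose j ≤ n ^ j := Nat.choose_le_pow n j
    _ ≤ (n + 1) ^ j := Nat.pow_le_pow_left n.le_succ j
    _ ≤ (n + 1) ^ k := Nat.pow_le_pow_right n.succ_pos (Nat.lt_succ_iff.mp (mem_range.mp hj))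

lemma summable_pow_mul_pow_div {c : ℕ} (hc : 0 < c) (k : ℕ) {r : ℝ} (hr0 : 0 ≤ r) (hr1 : r < 1) :
    Summable fun n : ℕ => ((n : ℝ) + 1) ^ k * r ^ (n / c) := by
  obtain ⟨t, ht0, ht1, hrt⟩ : ∃ t : ℝ, 0 < t ∧ t < 1 ∧ r ≤ t ^ c := by
    refine ⟨((1 + r) / 2) ^ (c⁻¹ : ℝ), Real.rpow_pos_of_pos (by linarith) _,
      Real.rpow_lt_one (by linarith) (by linarith) (by positivity), ?_⟩
    rw [Real.rpow_inv_natCast_pow (by linarith) hc.ne']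
    linarith
  have hgeom : Summable fun n : ℕ => ((n : ℝ) + 1) ^ k * t ^ n := by
    have := (summable_nat_add_iff (f := fun m : ℕ => (m : ℝ) ^ k * t ^ m) 1).mpr <|
      summable_pow_mul_geometric_of_norm_lt_one k (by rwa [Real.norm_of_nonneg ht0.le])
    refine (this.mul_left t⁻¹).congr fun n => ?_
    push_cast
    field_simp
    ring
  refine (hgeom.mul_left (t ^ c)⁻¹).of_nonneg_of_le (fun n => by positivity) fun n => ?_
  have hfloor : n ≤ c * (n / c) + c := by
    have := Nat.lt_div_mul_add (a := n) hc
    linarith [Nat.mul_comm c (n / c)]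
  have : r ^ (n / c) ≤ (t ^ c)⁻¹ * t ^ n :=
    calc r ^ (n / c) ≤ (t ^ c) ^ (n / c) := pow_le_pow_left₀ hr0 hrt _
      _ = (t ^ c)⁻¹ * t ^ (c * (n / c) + c) := by
        rw [pow_add, ← pow_mul]
        field_simp
      _ ≤ (t ^ c)⁻¹ * t ^ n :=
        mul_le_mul_of_nonneg_left (pow_le_pow_of_le_one ht0.le ht1.le hfloor) (by positivity)
  calc ((n : ℝ) + 1) ^ k * r ^ (n / c) ≤ ((n : ℝ) + 1) ^ k * ((t ^ c)⁻¹ * t ^ n) := by gcongr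
    _ = _ := by ring

lemma tsum_pow_mul_pow_div_ne_top {c : ℕ} (hc : 0 < c) (k : ℕ) {q : ENNReal} (hq : q < 1) :
    ∑' n : ℕ, ((n : ENNReal) + 1) ^ k * q ^ (n / c) ≠ ⊤ := by
  have hq' : q.toReal < 1 := by
    simpa using (ENNReal.toReal_lt_toReal hq.ne_top ENNReal.one_ne_top).mpr hq
  have hterm (n : ℕ) : ((n : ENNReal) + 1) ^ k * q ^ (n / c) =
      ENNReal.ofReal (((n : ℝ) + 1) ^ k * q.toReal ^ (n / c)) := by
    rw [ENNReal.ofReal_mul (by positivity), ENNReal.ofReal_pow (by positivity),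
      ENNReal.ofReal_pow ENNReal.toReal_nonneg, ENNReal.ofReal_toReal hq.ne_top,
      ENNReal.ofReal_add (by positivity) zero_le_one, ENNReal.ofReal_natCast, ENNReal.ofReal_one]
  simp_rw [hterm]
  rw [← ENNReal.ofReal_tsum_of_nonneg (fun n => by positivity)
    (summable_pow_mul_pow_div hc k ENNReal.toReal_nonneg hq')]
  exact ENNReal.ofReal_ne_top

section RandomBits

open MeasureTheory ProbabilityTheory Function

variable {Ω : Type*} [MeasurableSpace Ω] {μ : Measure Ω} [IsProbabilityMeasure μ]
  {X : ℕ → Ω → Bool}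

lemma measure_not_isExtensionVertex_le (hmeas : ∀ i, Measurable (X i)) (hindep : iIndepFun X μ)
    (hdist : ∀ i, μ {ω | X i ω = true} = 1 / 2) {k n : ℕ} {A A' : Finset (Fin n)}
    (hA : #A ≤ k) (hA' : A' ⊆ A) :
    μ {ω | ¬ ∃ v, IsExtensionVertex (bitsGraph (fun i => X i ω) n) A A' v} ≤
      (1 - 2⁻¹ ^ k) ^ (n / (3 * k ^ 2 + k + 1)) := by
  classical
  obtain ⟨V, hVcard, hVA, hinj⟩ := exists_injOn_pairDist A hA
  have hinj' {v a v' a'} (hv : v ∈ V) (ha : a ∈ A) (hv' : v' ∈ V) (ha' : a' ∈ A)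
      (h : pairDist (v, a) = pairDist (v', a')) : v = v' ∧ a = a' :=
    Prod.ext_iff.mp (hinj (by simp [hv, ha]) (by simp [hv', ha']) h)
  let S : V → Finset ℕ := fun v => A.image fun a => pairDist (v.1, a)
  let τ : ℕ → Bool := fun i => decide (i ∈ (V ×ˢ A').image pairDist)
  have hτ {v a} (hv : v ∈ V) (ha : a ∈ A) : τ (pairDist (v, a)) = true ↔ a ∈ A' := by
    simp only [τ, decide_eq_true_eq, mem_image, mem_product, Prod.exists]
    refine ⟨fun ⟨v', a', ⟨hv', ha'⟩, h⟩ => ?_, fun ha' => ⟨v, a, ⟨hv, ha'⟩, rfl⟩⟩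
    exact (hinj' hv' (hA' ha') hv ha h).2 ▸ ha'
  have hS : Pairwise (Disjoint on S) := by
    intro v v' hvv'
    simp only [onFun, S, disjoint_left, mem_image, not_exists, not_and]
    rintro _ ⟨a, ha, rfl⟩ a' ha' h
    exact hvv' (Subtype.ext (hinj' v'.2 ha' v.2 ha h).1.symm)
  have hsub : {ω | ¬ ∃ v, IsExtensionVertex (bitsGraph (fun i => X i ω) n) A A' v} ⊆
      ⋂ v, {ω | ∀ i ∈ S v, X i ω = τ i}ᶜ := by
    intro ω hω
    simp only [Set.mem_iInter, Set.mem_compl_iff, Set.mem_ofPred_eq]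
    intro v hpat
    have hbit {a} (ha : a ∈ A) : X (pairDist (v.1, a)) ω = true ↔ a ∈ A' := by
      rw [hpat _ (mem_image_of_mem _ ha)]; exact hτ v.2 ha
    have hvA : v.1 ∉ A := disjoint_left.mp hVA v.2
    refine hω ⟨v, hvA, fun a ha' => ⟨fun h => hvA (h ▸ hA' ha'), (hbit (hA' ha')).mpr ha'⟩,
      fun a ha hna hadj => hna ((hbit ha).mp hadj.2)⟩
  calc _ ≤ μ (⋂ v, {ω | ∀ i ∈ S v, X i ω = τ i}ᶜ) := measure_mono hsub
    _ ≤ (1 - 2⁻¹ ^ k) ^ Fintype.card V :=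
      measure_iInter_compl_le_of_iIndepSet (iIndepSet_forall_eq hmeas hindep hdist hS τ)
        (fun v => measurableSet_forall_eq hmeas _ _) fun v => by
          rw [measure_forall_eq hmeas hindep hdist]
          exact pow_le_pow_right_of_le_one' (by norm_num) (card_image_le.trans hA)
    _ = _ := by rw [Fintype.card_coe, hVcard]

lemma measure_not_extensionProperty_le (hmeas : ∀ i, Measurable (X i)) (hindep : iIndepFun X μ)
    (hdist : ∀ i, μ {ω | X i ω = true} = 1 / 2) (k n : ℕ) :
    μ {ω | ¬ ExtensionProperty k (bitsGraph (fun i => X i ω) n)} ≤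
      (k + 1) * 2 ^ k * (((n : ENNReal) + 1) ^ k * (1 - 2⁻¹ ^ k) ^ (n / (3 * k ^ 2 + k + 1))) := by
  classical
  set q : ENNReal := (1 - 2⁻¹ ^ k) ^ (n / (3 * k ^ 2 + k + 1))
  let P : Finset (Finset (Fin n)) := {A | #A ≤ k}
  let E (A A' : Finset (Fin n)) : Set Ω :=
    {ω | ¬ ∃ v, IsExtensionVertex (bitsGraph (fun i => X i ω) n) A A' v}
  have hsub : {ω | ¬ ExtensionProperty k (bitsGraph (fun i => X i ω) n)} ⊆
      ⋃ A ∈ P, ⋃ A' ∈ A.powerset, E A A' := by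
    intro ω hω
    simp only [ExtensionProperty, not_forall, Set.mem_ofPred_eq] at hω
    obtain ⟨A, hA, A', hA', hno⟩ := hω
    simp only [Set.mem_iUnion]
    exact ⟨A, by simpa [P] using hA, A', mem_powerset.mpr hA', hno⟩
  have hsumA (A) (hA : A ∈ P) : ∑ A' ∈ A.powerset, μ (E A A') ≤ 2 ^ k * q := by
    have hAk : #A ≤ k := (mem_filter.mp hA).2
    calc ∑ A' ∈ A.powerset, μ (E A A') ≤ ∑ A' ∈ A.powerset, q := sum_le_sum fun A' hA' =>
          measure_not_isExtensionVertex_le hmeas hindep hdist hAk (mem_powerset.mp hA')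
      _ ≤ 2 ^ k * q := by
        rw [sum_const, card_powerset, nsmul_eq_mul]
        gcongr
        exact_mod_cast Nat.pow_le_pow_right two_pos hAk
  calc μ _ ≤ ∑ A ∈ P, ∑ A' ∈ A.powerset, μ (E A A') :=
        (measure_mono hsub).trans <| (measure_biUnion_finset_le _ _).trans <|
          sum_le_sum fun A _ => measure_biUnion_finset_le _ _
    _ ≤ #P * (2 ^ k * q) := by grw [sum_le_sum hsumA, sum_const, nsmul_eq_mul]
    _ ≤ ((k + 1) * (n + 1) ^ k : ℕ) * (2 ^ k * q) := by
        gcongr; exact_mod_cast card_filter_card_le_mul_pow n k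
    _ = _ := by push_cast; ring

lemma ae_eventually_extensionProperty (hmeas : ∀ i, Measurable (X i)) (hindep : iIndepFun X μ)
    (hdist : ∀ i, μ {ω | X i ω = true} = 1 / 2) (k : ℕ) :
    ∀ᵐ ω ∂μ, ∀ᶠ n in atTop, ExtensionProperty k (bitsGraph (fun i => X i ω) n) := by
  have hsum : ∑' n, μ {ω | ¬ ExtensionProperty k (bitsGraph (fun i => X i ω) n)} ≠ ⊤ := by
    refine ne_top_of_le_ne_top ?_
      (ENNReal.tsum_le_tsum (measure_not_extensionProperty_le hmeas hindep hdist k))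
    rw [ENNReal.tsum_mul_left]
    refine ENNReal.mul_ne_top (by finiteness) (tsum_pow_mul_pow_div_ne_top (by positivity) k ?_)
    exact ENNReal.sub_lt_self ENNReal.one_ne_top one_ne_zero (by simp)
  filter_upwards [ae_eventually_notMem hsum] with ω hω
  exact hω.mono fun n hn => not_not.mp hn

end RandomBits

open MeasureTheory in
/-- Let `p̄_rand` be a random zero-one sequence, i.e. a sequence `X` of
independent random bits each equal to `1` with probability `1/2`.  Then almost surely: for
every `k` the graph `G(n, p̄_rand)` has the property `𝒜_k` for all sufficiently large `n`;
consequently, almost surely the truth value of every first-order sentence of the language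
`L` in `G(n, p̄_rand)` is eventually constant in `n`, i.e. a zero-one law holds. -/
theorem statement_19 {Ω : Type} [MeasurableSpace Ω] (μ : Measure Ω)
    [IsProbabilityMeasure μ] (X : ℕ → Ω → Bool) (hmeas : ∀ i, Measurable (X i))
    (hindep : ProbabilityTheory.iIndepFun X μ)
    (hdist : ∀ i, μ {ω | X i ω = true} = 1 / 2) :
    ∀ᵐ ω ∂μ,
      (∀ k : ℕ, ∃ n₀ : ℕ, ∀ n ≥ n₀, HasPropA k (bitsGraph (fun i => X i ω) n)) ∧
      ∀ ψ : Language.graph.Sentence,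
        (∀ᶠ n : ℕ in atTop,
          @Language.Sentence.Realize _ _ (bitsGraph (fun i => X i ω) n).structure ψ) ∨
        (∀ᶠ n : ℕ in atTop,
          ¬ @Language.Sentence.Realize _ _ (bitsGraph (fun i => X i ω) n).structure ψ) := by
  filter_upwards [ae_all_iff.mpr (ae_eventually_extensionProperty hmeas hindep hdist)] with ω hω
  refine ⟨fun k => ?_, fun ψ => eventually_realize_or_eventually_not_realize ψ (hω _)⟩
  obtain ⟨n₀, hn₀⟩ := eventually_atTop.mp (hω k)
  exact ⟨n₀, fun n hn => (hn₀ n hn).hasPropA⟩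

end RandomGraph
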